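/- arXiv:1207.6143 — 5 statements merged into one kernel-verified Lean document; each statement's English description precedes it below -/
import Mathlib

section
/- For a finite Blaschke product B of degree n with zeros in the open unit disk, the derivative of the boundary argument function φ(t) = arg(e^{it} B(e^{it})) satisfies φ'(t) = 1 + |B'(e^{it})| > 0 for all t; in particular e^{it}B(e^{it}) traverses the unit circle monotonically. -/
/-!
On the unit circle `1 - conj a * z = z * conj (z - a)`, so every Blaschke factor has modulus one
there and `z B'(z) / B(z) = ∑ₖ (1 - |aₖ|²) / |z - aₖ|²` is a nonnegative real number; since
`|B(z)| = |z| = 1` it equals `|B'(z)|`. Differentiating `exp (i φ(t)) = e^{it} B(e^{it})` gives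
`φ'(t) = 1 + z B'(z) / B(z)` at `z = e^{it}`.
-/

open Complex ComplexConjugate

noncomputable def blaschkeFactor (a z : ℂ) : ℂ := (z - a) / (1 - conj a * z)

theorem one_sub_conj_mul_ne_zero {a z : ℂ} (ha : ‖a‖ < 1) (hz : ‖z‖ ≤ 1) :
    1 - conj a * z ≠ 0 := by
  refine sub_ne_zero.mpr fun h => ?_
  have : ‖conj a * z‖ < 1 := by
    rw [norm_mul, RCLike.norm_conj]
    nlinarith [norm_nonneg a, norm_nonneg z]
  simp [← h] at this

theorem sub_ne_zero_of_norm_lt_one {a z : ℂ} (ha : ‖a‖ < 1) (hz : ‖z‖ = 1) : z - a ≠ 0 :=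
  sub_ne_zero.mpr (ne_of_apply_ne norm (hz ▸ ha.ne'))

theorem one_sub_conj_mul_eq_mul_conj_sub (a : ℂ) {z : ℂ} (hz : ‖z‖ = 1) :
    1 - conj a * z = z * conj (z - a) := by
  have hzz : z * conj z = 1 := by
    rw [mul_conj, normSq_eq_norm_sq, hz]; norm_num
  rw [map_sub, mul_sub, hzz]; ring

theorem hasDerivAt_blaschkeFactor {a z : ℂ} (h : 1 - conj a * z ≠ 0) :
    HasDerivAt (blaschkeFactor a) ((1 - conj a * a) / (1 - conj a * z) ^ 2) z := by
  refine (((hasDerivAt_id z).sub_const a).div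
    (((hasDerivAt_id z).const_mul (conj a)).const_sub 1) h).congr_deriv ?_
  simp only [id]; ring

theorem logDeriv_blaschkeFactor {a z : ℂ} (hza : z - a ≠ 0) (h : 1 - conj a * z ≠ 0) :
    logDeriv (blaschkeFactor a) z = (1 - conj a * a) / ((z - a) * (1 - conj a * z)) := by
  rw [logDeriv_apply, (hasDerivAt_blaschkeFactor h).deriv, blaschkeFactor]
  field_simp

theorem differentiableAt_blaschkeFactor {a z : ℂ} (ha : ‖a‖ < 1) (hz : ‖z‖ ≤ 1) :
    DifferentiableAt ℂ (blaschkeFactor a) z :=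
  (hasDerivAt_blaschkeFactor (one_sub_conj_mul_ne_zero ha hz)).differentiableAt

theorem norm_blaschkeFactor {a z : ℂ} (ha : ‖a‖ < 1) (hz : ‖z‖ = 1) :
    ‖blaschkeFactor a z‖ = 1 := by
  rw [blaschkeFactor, norm_div, one_sub_conj_mul_eq_mul_conj_sub a hz, norm_mul, hz, one_mul,
    RCLike.norm_conj, div_self (norm_ne_zero_iff.mpr (sub_ne_zero_of_norm_lt_one ha hz))]

theorem mul_logDeriv_blaschkeFactor {a z : ℂ} (ha : ‖a‖ < 1) (hz : ‖z‖ = 1) :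
    z * logDeriv (blaschkeFactor a) z = ((1 - ‖a‖ ^ 2) / ‖z - a‖ ^ 2 : ℝ) := by
  have hza : z - a ≠ 0 := sub_ne_zero_of_norm_lt_one ha hz
  have hz0 : z ≠ 0 := by rintro rfl; simp at hz
  rw [logDeriv_blaschkeFactor hza (one_sub_conj_mul_ne_zero ha hz.le),
    one_sub_conj_mul_eq_mul_conj_sub a hz]
  have hcz : conj (z - a) ≠ 0 := (map_ne_zero _).mpr hza
  push_cast
  rw [← conj_mul' a, ← mul_conj' (z - a)]
  field_simp

section BlaschkeProduct

variable {ι : Type*} [Fintype ι] {c : ℂ} {a : ι → ℂ} {z : ℂ}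

noncomputable def blaschkeProduct (c : ℂ) (a : ι → ℂ) (z : ℂ) : ℂ :=
  c * ∏ k, blaschkeFactor (a k) z

theorem norm_blaschkeProduct (hc : ‖c‖ = 1) (ha : ∀ k, ‖a k‖ < 1) (hz : ‖z‖ = 1) :
    ‖blaschkeProduct c a z‖ = 1 := by
  simp only [blaschkeProduct, norm_mul, norm_prod, hc, norm_blaschkeFactor (ha _) hz,
    Finset.prod_const_one, mul_one]

theorem blaschkeProduct_ne_zero (hc : ‖c‖ = 1) (ha : ∀ k, ‖a k‖ < 1) (hz : ‖z‖ = 1) :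
    blaschkeProduct c a z ≠ 0 :=
  norm_ne_zero_iff.mp ((norm_blaschkeProduct hc ha hz).trans_ne one_ne_zero)

theorem differentiableAt_blaschkeProduct (ha : ∀ k, ‖a k‖ < 1) (hz : ‖z‖ ≤ 1) :
    DifferentiableAt ℂ (blaschkeProduct c a) z :=
  (DifferentiableAt.fun_finsetProd fun k _ => differentiableAt_blaschkeFactor (ha k) hz).const_mul c

theorem mul_logDeriv_blaschkeProduct (hc : ‖c‖ = 1) (ha : ∀ k, ‖a k‖ < 1) (hz : ‖z‖ = 1) :
    z * logDeriv (blaschkeProduct c a) z = ‖deriv (blaschkeProduct c a) z‖ := by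
  set r : ℝ := ∑ k, (1 - ‖a k‖ ^ 2) / ‖z - a k‖ ^ 2
  have hr : 0 ≤ r := Finset.sum_nonneg fun k _ => div_nonneg
    (sub_nonneg.mpr (pow_le_one₀ (norm_nonneg _) (ha k).le)) (sq_nonneg _)
  have hc0 : c ≠ 0 := norm_ne_zero_iff.mp (hc ▸ one_ne_zero)
  have hlog : z * logDeriv (blaschkeProduct c a) z = r := by
    have hprod : logDeriv (fun w => ∏ k, blaschkeFactor (a k) w) z
        = ∑ k, logDeriv (blaschkeFactor (a k)) z :=
      logDeriv_prod
        (fun k _ => norm_ne_zero_iff.mp ((norm_blaschkeFactor (ha k) hz).trans_ne one_ne_zero))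
        (fun k _ => differentiableAt_blaschkeFactor (ha k) hz.le)
    unfold blaschkeProduct
    rw [logDeriv_const_mul z c hc0, hprod, Finset.mul_sum]
    simp only [r, ofReal_sum]
    exact Finset.sum_congr rfl fun k _ => mul_logDeriv_blaschkeFactor (ha k) hz
  have hderiv : deriv (blaschkeProduct c a) z
      = blaschkeProduct c a z * logDeriv (blaschkeProduct c a) z := by
    rw [logDeriv_apply, mul_div_cancel₀ _ (blaschkeProduct_ne_zero hc ha hz)]
  rw [hlog, hderiv, norm_mul, norm_blaschkeProduct hc ha hz, ← hz, ← norm_mul, hlog, norm_real,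
    Real.norm_of_nonneg hr]

end BlaschkeProduct

theorem HasDerivAt.ofReal_eq_one_add_mul_logDeriv {φ : ℝ → ℝ} {φ' t : ℝ} {F : ℂ → ℂ}
    (hφ : HasDerivAt φ φ' t) (hF : DifferentiableAt ℂ F (cexp (t * I)))
    (hF0 : F (cexp (t * I)) ≠ 0)
    (hlift : ∀ s : ℝ, cexp (φ s * I) = cexp (s * I) * F (cexp (s * I))) :
    (φ' : ℂ) = 1 + cexp (t * I) * logDeriv F (cexp (t * I)) := by
  have hφlift : HasDerivAt (fun s : ℝ => cexp (φ s * I)) (cexp (φ t * I) * (φ' * I)) t :=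
    (hφ.ofReal_comp.mul_const I).cexp
  rw [funext hlift, hlift t] at hφlift
  set z := cexp (t * I)
  have hexp : HasDerivAt (fun w : ℂ => cexp (w * I)) (z * I) t := by
    simpa using ((hasDerivAt_id (t : ℂ)).mul_const I).cexp
  have hcurve : HasDerivAt (fun s : ℝ => cexp (s * I) * F (cexp (s * I)))
      (z * I * F z + z * (_root_.deriv F z * (z * I))) t :=
    (hexp.mul (hF.hasDerivAt.comp (t : ℂ) hexp)).comp_ofReal
  have key := hφlift.unique hcurve
  rw [← sub_eq_iff_eq_add', logDeriv_apply, ← mul_div_assoc, eq_div_iff hF0]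
  apply mul_left_cancel₀ (mul_ne_zero (exp_ne_zero _) I_ne_zero : z * I ≠ 0)
  linear_combination key

/-- For a finite Blaschke product `B` of degree `n` with zeros in the open unit disk,
any continuous (differentiable) branch `φ` of the argument of `t ↦ e^{it} B(e^{it})`
satisfies `φ'(t) = 1 + |B'(e^{it})| > 0` for all `t`. -/
theorem blaschke_boundary_argument_monotone (n : ℕ) (c : ℂ) (hc : ‖c‖ = 1)
    (a : Fin n → ℂ) (ha : ∀ k, ‖a k‖ < 1) (B : ℂ → ℂ)
    (hB : ∀ z : ℂ, B z = c * ∏ k, (z - a k) / (1 - (starRingEnd ℂ) (a k) * z))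
    (φ : ℝ → ℝ) (hφ : Differentiable ℝ φ)
    (hbranch : ∀ t : ℝ, Complex.exp (φ t * Complex.I) =
      Complex.exp (t * Complex.I) * B (Complex.exp (t * Complex.I))) :
    ∀ t : ℝ, deriv φ t = 1 + ‖deriv B (Complex.exp (t * Complex.I))‖ ∧ 0 < deriv φ t := by
  obtain rfl : B = blaschkeProduct c a := funext hB
  intro t
  have hz : ‖cexp (t * I)‖ = 1 := norm_exp_ofReal_mul_I t
  have hφ' := (hφ t).hasDerivAt.ofReal_eq_one_add_mul_logDeriv
    (differentiableAt_blaschkeProduct ha hz.le) (blaschkeProduct_ne_zero hc ha hz) hbranch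
  rw [mul_logDeriv_blaschkeProduct hc ha hz] at hφ'
  have hderiv : deriv φ t = 1 + ‖deriv (blaschkeProduct c a) (cexp (t * I))‖ := by
    exact_mod_cast hφ'
  exact ⟨hderiv, hderiv ▸ by positivity⟩
end

section
/- Let 0 ≤ t_1 < ⋯ < t_{n+1} < 2π, z_k = e^{it_k}, β_k ∈ ℝ with ∑ β_k = 1 and ∑ |β_k| ≤ 2, and let f satisfy f''/f' = -2 ∑_{k=1}^{n+1} β_k/(z - z_k) on the unit disk. Then for any 0 ≤ θ_1 < θ_2 < 2π and 0 < r < 1, ∫_{θ_1}^{θ_2} Re(1 + z f''(z)/f'(z)) dθ > -π, where z = r e^{iθ}. (This is the close-to-convexity integral condition.) -/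
/-!
Since `∑ βₖ = 1`, the pre-Schwarzian identity rewrites `1 + z f''(z)/f'(z)` as
`∑ βₖ (zₖ + z)/(zₖ - z)`, a combination of Herglotz–Riesz kernels
(`herglotzRieszKernel 0 z zₖ` in Mathlib, whose last argument is the point on the circle).
The real part of each kernel is the Poisson kernel: it is positive, and by the mean value property
its integral over the whole circle `|z| = r` is `2π`. Hence each `Iₖ = ∫_{θ₁}^{θ₂} Re(⋯) dθ` lies
in `(0, 2π]`, and `∑ βₖ Iₖ > -2π ∑ₖ max(-βₖ, 0) ≥ -π`, because the negative parts of the `βₖ` sum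
to `(∑ |βₖ| - 1)/2 ≤ 1/2`.
-/

open Complex Metric intervalIntegral

section HerglotzRiesz

variable {w : ℂ} {r : ℝ}

lemma re_herglotzRieszKernel_pos {z : ℂ} (hz : ‖z‖ < ‖w‖) :
    0 < (herglotzRieszKernel 0 z w).re := by
  have hz0 : 0 ≤ ‖z‖ := norm_nonneg z
  calc 0 < (‖w‖ - ‖z - 0‖) / (‖w‖ + ‖z - 0‖) := by rw [sub_zero]; apply div_pos <;> linarith
    _ ≤ _ := le_re_herglotzRieszKernel (R := ‖w‖) (by simp) (by simpa using hz)

lemma differentiableOn_herglotzRieszKernel :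
    DifferentiableOn ℂ (fun z ↦ herglotzRieszKernel 0 z w) (ball 0 ‖w‖) := by
  intro z hz
  have hzw : w - z ≠ 0 := sub_ne_zero.2 fun h ↦ by simp [h] at hz
  simp only [herglotzRieszKernel_def, sub_zero]
  exact ((differentiableAt_const w).add differentiableAt_id |>.div
    ((differentiableAt_const w).sub differentiableAt_id) hzw).differentiableWithinAt

lemma norm_circleMap_zero_lt (hr : |r| < ‖w‖) (θ : ℝ) : ‖circleMap 0 r θ‖ < ‖w‖ :=
  norm_circleMap_zero r θ ▸ hr

lemma continuous_herglotzRieszKernel_circleMap (hr : |r| < ‖w‖) :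
    Continuous fun θ ↦ herglotzRieszKernel 0 (circleMap 0 r θ) w :=
  differentiableOn_herglotzRieszKernel.continuousOn.comp_continuous (continuous_circleMap 0 r)
    fun θ ↦ mem_ball_zero_iff.2 (norm_circleMap_zero_lt hr θ)

lemma integral_herglotzRieszKernel_circleMap (hr : |r| < ‖w‖) :
    ∫ θ in 0..2 * Real.pi, herglotzRieszKernel 0 (circleMap 0 r θ) w = 2 * Real.pi := by
  have hw : w ≠ 0 := norm_pos_iff.1 ((abs_nonneg r).trans_lt hr)
  have hmean := (differentiableOn_herglotzRieszKernel.diffContOnCl_ball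
    (closedBall_subset_ball hr)).circleAverage
  rw [Real.circleAverage_def] at hmean
  generalize ∫ θ in 0..2 * Real.pi, herglotzRieszKernel 0 (circleMap 0 r θ) w = I at hmean ⊢
  simp only [herglotzRieszKernel_def, sub_zero, add_zero, div_self hw] at hmean
  rw [real_smul, ofReal_inv, inv_mul_eq_one₀ (by exact_mod_cast Real.two_pi_pos.ne')] at hmean
  exact_mod_cast hmean.symm

lemma integral_re_herglotzRieszKernel_circleMap_pos (hr : |r| < ‖w‖) {θ₁ θ₂ : ℝ} (h : θ₁ < θ₂) :
    0 < ∫ θ in θ₁..θ₂, (herglotzRieszKernel 0 (circleMap 0 r θ) w).re :=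
  intervalIntegral_pos_of_pos
    ((continuous_re.comp (continuous_herglotzRieszKernel_circleMap hr)).intervalIntegrable _ _)
    (fun θ ↦ re_herglotzRieszKernel_pos (norm_circleMap_zero_lt hr θ)) h

lemma integral_re_herglotzRieszKernel_circleMap_le (hr : |r| < ‖w‖) {θ₁ θ₂ : ℝ} (h₁ : 0 ≤ θ₁)
    (h : θ₁ ≤ θ₂) (h₂ : θ₂ ≤ 2 * Real.pi) :
    ∫ θ in θ₁..θ₂, (herglotzRieszKernel 0 (circleMap 0 r θ) w).re ≤ 2 * Real.pi := by
  have hK := continuous_herglotzRieszKernel_circleMap hr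
  calc _ ≤ ∫ θ in 0..2 * Real.pi, (herglotzRieszKernel 0 (circleMap 0 r θ) w).re :=
        integral_mono_interval h₁ h h₂
          (.of_forall fun θ ↦ (re_herglotzRieszKernel_pos (norm_circleMap_zero_lt hr θ)).le)
          ((continuous_re.comp hK).intervalIntegrable _ _)
    _ = 2 * Real.pi := by
      have hre := reCLM.intervalIntegral_comp_comm
        (hK.intervalIntegrable (μ := MeasureTheory.volume) 0 (2 * Real.pi))
      simp only [reCLM_apply] at hre
      rw [hre, integral_herglotzRieszKernel_circleMap hr, ← ofReal_ofNat, ← ofReal_mul, ofReal_re]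

end HerglotzRiesz

lemma one_add_mul_sum_div_sub_eq_sum_herglotzRieszKernel {ι : Type*} [Fintype ι] {β w : ι → ℂ}
    {z : ℂ} (hβ : ∑ k, β k = 1) (hz : ∀ k, z ≠ w k) :
    1 + z * (-2 * ∑ k, β k / (z - w k)) = ∑ k, β k * herglotzRieszKernel 0 z (w k) := by
  rw [← hβ, Finset.mul_sum, Finset.mul_sum, ← Finset.sum_add_distrib]
  refine Finset.sum_congr rfl fun k _ ↦ ?_
  have h₁ : z - w k ≠ 0 := sub_ne_zero.2 (hz k)
  have h₂ : w k - z ≠ 0 := sub_ne_zero.2 (hz k).symm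
  rw [herglotzRieszKernel_def, sub_zero, sub_zero]
  field_simp
  ring

lemma neg_lt_sum_mul_of_sum_abs_le_two {ι : Type*} [Fintype ι] {β I : ι → ℝ} {m : ℝ}
    (hβ : ∑ k, β k = 1) (hβabs : ∑ k, |β k| ≤ 2) (hI : ∀ k, 0 < I k) (hIm : ∀ k, I k ≤ 2 * m) :
    -m < ∑ k, β k * I k := by
  obtain ⟨k₀, hk₀⟩ : ∃ k, 0 < β k := by
    by_contra! h
    linarith [Finset.sum_nonpos fun k (_ : k ∈ Finset.univ) ↦ h k]
  have hle : ∀ k, (β k - |β k|) * m ≤ β k * I k := by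
    intro k
    rcases le_or_gt 0 (β k) with hβk | hβk
    · rw [abs_of_nonneg hβk, sub_self, zero_mul]
      exact mul_nonneg hβk (hI k).le
    · rw [abs_of_neg hβk]
      nlinarith [hIm k]
  have hlt : (β k₀ - |β k₀|) * m < β k₀ * I k₀ := by
    rw [abs_of_pos hk₀, sub_self, zero_mul]
    exact mul_pos hk₀ (hI k₀)
  have hm : 0 ≤ m := by linarith [hI k₀, hIm k₀]
  calc -m ≤ (∑ k, β k - ∑ k, |β k|) * m := by rw [hβ]; nlinarith
    _ = ∑ k, (β k - |β k|) * m := by rw [← Finset.sum_sub_distrib, Finset.sum_mul]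
    _ < ∑ k, β k * I k := Finset.sum_lt_sum (fun k _ ↦ hle k) ⟨k₀, Finset.mem_univ _, hlt⟩

theorem close_to_convex_integral_general (n : ℕ) (t : Fin (n + 1) → ℝ)
    (β : Fin (n + 1) → ℝ) (hβsum : ∑ k, β k = 1) (hβabs : ∑ k, |β k| ≤ 2)
    (f : ℂ → ℂ)
    (hps : ∀ z ∈ ball (0 : ℂ) 1,
      deriv (deriv f) z / deriv f z =
        -2 * ∑ k, (β k : ℂ) / (z - Complex.exp (t k * Complex.I)))
    (θ₁ θ₂ r : ℝ) (hθ₁ : 0 ≤ θ₁) (hθ : θ₁ < θ₂) (hθ₂ : θ₂ < 2 * Real.pi)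
    (hr0 : 0 < r) (hr1 : r < 1) :
    (∫ θ in θ₁..θ₂,
        (1 + (r * Complex.exp (θ * Complex.I)) *
          deriv (deriv f) (r * Complex.exp (θ * Complex.I)) /
            deriv f (r * Complex.exp (θ * Complex.I))).re) > -Real.pi := by
  have hr : ∀ k, |r| < ‖exp (t k * I)‖ := fun k ↦ by
    rwa [norm_exp_ofReal_mul_I, abs_of_pos hr0]
  set K : Fin (n + 1) → ℝ → ℝ := fun k θ ↦
    (herglotzRieszKernel 0 (circleMap 0 r θ) (exp (t k * I))).re
  have hpoint : ∀ θ : ℝ, (1 + (r * exp (θ * I)) * deriv (deriv f) (r * exp (θ * I)) /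
      deriv f (r * exp (θ * I))).re = ∑ k, β k * K k θ := by
    intro θ
    have hz : ‖circleMap 0 r θ‖ < 1 := norm_exp_ofReal_mul_I (t 0) ▸ norm_circleMap_zero_lt (hr 0) θ
    have hzw : ∀ k, circleMap 0 r θ ≠ exp (t k * I) := fun k h ↦ by
      simp [h] at hz
    rw [← circleMap_zero, mul_div_assoc, hps _ (mem_ball_zero_iff.2 hz),
      one_add_mul_sum_div_sub_eq_sum_herglotzRieszKernel (by exact_mod_cast hβsum) hzw, re_sum]
    simp only [re_ofReal_mul, K]
  have hKint : ∀ k, IntervalIntegrable (K k) MeasureTheory.volume θ₁ θ₂ := fun k ↦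
    (continuous_re.comp (continuous_herglotzRieszKernel_circleMap (hr k))).intervalIntegrable _ _
  rw [integral_congr fun θ _ ↦ hpoint θ,
    integral_finsetSum fun k _ ↦ (hKint k).const_mul _]
  simp only [integral_const_mul]
  exact neg_lt_sum_mul_of_sum_abs_le_two hβsum hβabs
    (fun k ↦ integral_re_herglotzRieszKernel_circleMap_pos (hr k) hθ)
    (fun k ↦ integral_re_herglotzRieszKernel_circleMap_le (hr k) hθ₁ hθ.le hθ₂.le)

/-- The close-to-convexity integral condition: if `f` is analytic and locally injective on
the unit disk with `f''/f' = -2 ∑ βₖ/(z - zₖ)`, `zₖ = e^{itₖ}`, `∑ βₖ = 1`,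
`∑ |βₖ| ≤ 2`, then for `0 ≤ θ₁ < θ₂ < 2π` and `0 < r < 1`,
`∫_{θ₁}^{θ₂} Re(1 + z f''/f') dθ > -π` with `z = r e^{iθ}`. -/
theorem close_to_convex_integral (n : ℕ) (t : Fin (n + 1) → ℝ)
    (ht : StrictMono t) (ht0 : 0 ≤ t 0) (ht2π : ∀ k, t k < 2 * Real.pi)
    (β : Fin (n + 1) → ℝ) (hβsum : ∑ k, β k = 1) (hβabs : ∑ k, |β k| ≤ 2)
    (f : ℂ → ℂ) (hf : DifferentiableOn ℂ f (ball (0 : ℂ) 1))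
    (hf' : ∀ z ∈ ball (0 : ℂ) 1, deriv f z ≠ 0)
    (hps : ∀ z ∈ ball (0 : ℂ) 1,
      deriv (deriv f) z / deriv f z =
        -2 * ∑ k, (β k : ℂ) / (z - Complex.exp (t k * Complex.I)))
    (θ₁ θ₂ r : ℝ) (hθ₁ : 0 ≤ θ₁) (hθ : θ₁ < θ₂) (hθ₂ : θ₂ < 2 * Real.pi)
    (hr0 : 0 < r) (hr1 : r < 1) :
    (∫ θ in θ₁..θ₂,
        (1 + (r * Complex.exp (θ * Complex.I)) *
          deriv (deriv f) (r * Complex.exp (θ * Complex.I)) /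
            deriv f (r * Complex.exp (θ * Complex.I))).re) > -Real.pi :=
  close_to_convex_integral_general n t β hβsum hβabs f hps θ₁ θ₂ r hθ₁ hθ hθ₂ hr0 hr1
end

section
/- Fix 0 < θ < π and 0 ≤ ρ ≤ r < 1. Among all arcs of angular length 2θ on the unit circle and points a with |a| = ρ ≤ r, the integral ∫_arc (1 - |a|²)/|e^{it} - a|² dt is maximized when |a| = r and a/|a| is the midpoint of the arc; hence ∫_{α}^{α+2θ} (1 - |a|²)/|e^{it} - a|² dt ≤ 4·arctan(((1 + r)/(1 - r))·tan(θ/2)) for every a with |a| ≤ r. -/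
/-!
Rotating by `arg a`, the integrand becomes the Poisson kernel
`P_ρ(u) = (1 - ρ²) / (1 + ρ² - 2ρ cos u)` with `ρ = |a|`, integrated over `[β - θ, β + θ]`.
As `P_ρ` is even and `2π`-periodic, we may take `β ∈ [0, π]`. Sliding the interval to
`[-θ, θ]` exchanges `[θ, β + θ]` for its translate `[-θ, β - θ]`, where `cos`, and with it `P_ρ`,
is pointwise larger because `cos (s - θ) - cos (s + θ) = 2 sin s sin θ ≥ 0`. On `[-θ, θ]` the
kernel has the primitive `2 arctan (((1 + ρ)/(1 - ρ)) tan (u/2))`, which increases with `ρ`.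
-/

open Complex Real Set intervalIntegral

noncomputable def polarPoissonKernel (ρ u : ℝ) : ℝ :=
  (1 - ρ ^ 2) / (1 + ρ ^ 2 - 2 * ρ * Real.cos u)

lemma Function.Periodic.exists_mem_Icc_eq_of_even {α : Type*} {g : ℝ → α}
    (hp : Function.Periodic g (2 * π)) (he : Function.Even g) (β : ℝ) :
    ∃ β' ∈ Icc 0 π, g β = g β' := by
  set β₀ := toIocMod two_pi_pos (-π) β
  have hβ₀ : β₀ ∈ Ioc (-π) (-π + 2 * π) := toIocMod_mem_Ioc _ _ _
  have hg : g β = g β₀ := by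
    rw [← hp.sub_zsmul_eq (toIocDiv two_pi_pos (-π) β), self_sub_toIocDiv_zsmul]
  refine ⟨|β₀|, ⟨abs_nonneg _, abs_le.2 ⟨by linarith [hβ₀.1], by linarith [hβ₀.2]⟩⟩, ?_⟩
  rcases abs_choice β₀ with h | h <;> rw [h]
  · exact hg
  · rw [he, hg]

section ArcIntegral

variable {E : Type*} [NormedAddCommGroup E] [NormedSpace ℝ E] {f : ℝ → E}

lemma Function.Periodic.arc_intervalIntegral {T : ℝ} (hf : Function.Periodic f T) (θ : ℝ) :
    Function.Periodic (fun β => ∫ u in (β - θ)..(β + θ), f u) T := by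
  intro β
  dsimp only
  rw [show β + T - θ = β - θ + T by ring, show β + T + θ = β + θ + T by ring,
    ← integral_comp_add_right f T]
  exact integral_congr fun x _ => hf x

lemma Function.Even.arc_intervalIntegral (hf : Function.Even f) (θ : ℝ) :
    Function.Even (fun β => ∫ u in (β - θ)..(β + θ), f u) := by
  intro β
  dsimp only
  rw [show -β - θ = -(β + θ) by ring, show -β + θ = -(β - θ) by ring, ← integral_comp_neg f]
  exact integral_congr fun x _ => hf x

end ArcIntegral

section PoissonKernel

variable {ρ : ℝ}

lemma polarPoissonKernel_denom_pos (hρ : |ρ| < 1) (u : ℝ) :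
    0 < 1 + ρ ^ 2 - 2 * ρ * Real.cos u := by
  have h : ρ * Real.cos u ≤ |ρ| := (le_abs_self _).trans <| by
    rw [abs_mul]; exact mul_le_of_le_one_right (abs_nonneg _) (abs_cos_le_one u)
  nlinarith [sq_abs ρ, abs_nonneg ρ]

lemma continuous_polarPoissonKernel (hρ : |ρ| < 1) : Continuous (polarPoissonKernel ρ) :=
  continuous_const.div (by fun_prop) fun u => (polarPoissonKernel_denom_pos hρ u).ne'

lemma periodic_polarPoissonKernel : Function.Periodic (polarPoissonKernel ρ) (2 * π) := by
  intro u
  simp only [polarPoissonKernel, Real.cos_add_two_pi]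

lemma even_polarPoissonKernel : Function.Even (polarPoissonKernel ρ) := by
  intro u
  simp only [polarPoissonKernel, Real.cos_neg]

lemma polarPoissonKernel_le_of_cos_le (hρ0 : 0 ≤ ρ) (hρ1 : ρ < 1) {v w : ℝ}
    (h : Real.cos v ≤ Real.cos w) : polarPoissonKernel ρ v ≤ polarPoissonKernel ρ w :=
  div_le_div_of_nonneg_left (by nlinarith)
    (polarPoissonKernel_denom_pos (abs_lt.2 ⟨by linarith, hρ1⟩) w) (by nlinarith)

lemma hasDerivAt_two_mul_arctan_tan_half (hρ : |ρ| < 1) {u : ℝ} (hu : u ∈ Ioo (-π) π) :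
    HasDerivAt (fun x => 2 * Real.arctan ((1 + ρ) / (1 - ρ) * Real.tan (x / 2)))
      (polarPoissonKernel ρ u) u := by
  obtain ⟨hρl, hρr⟩ := abs_lt.1 hρ
  have hc : 0 < Real.cos (u / 2) :=
    Real.cos_pos_of_mem_Ioo ⟨by linarith [hu.1], by linarith [hu.2]⟩
  have hderiv := (((Real.hasDerivAt_tan hc.ne').comp u ((hasDerivAt_id' u).div_const 2)).const_mul
    ((1 + ρ) / (1 - ρ))).arctan.const_mul 2
  refine hderiv.congr_deriv ?_
  have hcos_sq : Real.cos (u / 2) ^ 2 = (1 + Real.cos u) / 2 := by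
    rw [Real.cos_sq]; ring_nf
  have hsin_sq : Real.sin (u / 2) ^ 2 = (1 - Real.cos u) / 2 := by
    linarith [Real.sin_sq_add_cos_sq (u / 2)]
  have hcos_pos : 0 < 1 + Real.cos u := by nlinarith
  have htan_sq : Real.tan (u / 2) ^ 2 = (1 - Real.cos u) / (1 + Real.cos u) := by
    rw [Real.tan_eq_sin_div_cos, div_pow, hsin_sq, hcos_sq]
    field_simp
  have h1ρ : 0 < 1 - ρ := by linarith
  have hsec_sq : 1 + ((1 + ρ) / (1 - ρ)) ^ 2 * Real.tan (u / 2) ^ 2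
      = 2 * (1 + ρ ^ 2 - 2 * ρ * Real.cos u) / ((1 - ρ) ^ 2 * (1 + Real.cos u)) := by
    rw [htan_sq]
    field_simp
    ring
  have hD := polarPoissonKernel_denom_pos hρ u
  rw [Function.comp_apply, mul_pow, hsec_sq, hcos_sq, polarPoissonKernel]
  field_simp
  ring

lemma integral_polarPoissonKernel_neg_self (hρ : |ρ| < 1) {θ : ℝ} (hθ0 : 0 ≤ θ) (hθπ : θ < π) :
    ∫ u in -θ..θ, polarPoissonKernel ρ u
      = 4 * Real.arctan ((1 + ρ) / (1 - ρ) * Real.tan (θ / 2)) := by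
  rw [integral_eq_sub_of_hasDerivAt (fun u hu => hasDerivAt_two_mul_arctan_tan_half hρ ?_)
      ((continuous_polarPoissonKernel hρ).intervalIntegrable _ _)]
  · rw [neg_div, Real.tan_neg, mul_neg, arctan_neg]
    ring
  · rw [uIcc_of_le (by linarith)] at hu
    exact ⟨by linarith [hu.1], by linarith [hu.2]⟩

lemma integral_polarPoissonKernel_shift_le (hρ0 : 0 ≤ ρ) (hρ1 : ρ < 1) {θ β : ℝ}
    (hθ : θ ∈ Icc 0 π) (hβ : β ∈ Icc 0 π) :
    ∫ u in (β - θ)..(β + θ), polarPoissonKernel ρ u ≤ ∫ u in -θ..θ, polarPoissonKernel ρ u := by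
  have hcont := continuous_polarPoissonKernel (abs_lt.2 ⟨by linarith, hρ1⟩)
  have hint := hcont.intervalIntegrable (μ := MeasureTheory.volume)
  have hgain_le_loss : ∫ u in θ..(β + θ), polarPoissonKernel ρ u
      ≤ ∫ u in -θ..(β - θ), polarPoissonKernel ρ u := by
    have hcos : ∀ s ∈ Icc 0 β, Real.cos (s + θ) ≤ Real.cos (s - θ) := fun s hs => by
      have := mul_nonneg (Real.sin_nonneg_of_nonneg_of_le_pi hs.1 (hs.2.trans hβ.2))
        (Real.sin_nonneg_of_nonneg_of_le_pi hθ.1 hθ.2)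
      nlinarith [Real.cos_add s θ, Real.cos_sub s θ]
    have hmono : ∫ s in 0..β, polarPoissonKernel ρ (s + θ)
        ≤ ∫ s in 0..β, polarPoissonKernel ρ (s - θ) :=
      integral_mono_on hβ.1 ((hcont.comp (continuous_add_const θ)).intervalIntegrable _ _)
        ((hcont.comp (continuous_sub_right θ)).intervalIntegrable _ _)
        fun s hs => polarPoissonKernel_le_of_cos_le hρ0 hρ1 (hcos s hs)
    rwa [integral_comp_add_right, integral_comp_sub_right, zero_add, zero_sub] at hmono
  linarith [integral_add_adjacent_intervals (hint (-θ) (β - θ)) (hint (β - θ) (β + θ)),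
    integral_add_adjacent_intervals (hint (-θ) θ) (hint θ (β + θ))]

lemma integral_polarPoissonKernel_arc_le (hρ0 : 0 ≤ ρ) (hρ1 : ρ < 1) {θ : ℝ}
    (hθ : θ ∈ Icc 0 π) (β : ℝ) :
    ∫ u in (β - θ)..(β + θ), polarPoissonKernel ρ u ≤ ∫ u in -θ..θ, polarPoissonKernel ρ u := by
  obtain ⟨β', hβ', hβ_eq⟩ :=
    (periodic_polarPoissonKernel.arc_intervalIntegral θ).exists_mem_Icc_eq_of_even
      (even_polarPoissonKernel.arc_intervalIntegral θ) β
  exact hβ_eq ▸ integral_polarPoissonKernel_shift_le hρ0 hρ1 hθ hβ'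

end PoissonKernel

lemma norm_exp_ofReal_mul_I_sub_sq (a : ℂ) (t : ℝ) :
    ‖Complex.exp (t * I) - a‖ ^ 2 = 1 + ‖a‖ ^ 2 - 2 * ‖a‖ * Real.cos (t - arg a) := by
  have hrot : Complex.exp (t * I) - a
      = Complex.exp (arg a * I) * (Complex.exp ((t - arg a : ℝ) * I) - ‖a‖) := by
    rw [mul_sub, ← Complex.exp_add, mul_comm (Complex.exp _) (‖a‖ : ℂ), norm_mul_exp_arg_mul_I]
    push_cast
    ring_nf
  rw [hrot, norm_mul, norm_exp_ofReal_mul_I, one_mul, Complex.sq_norm, normSq_apply]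
  simp only [sub_re, sub_im, exp_ofReal_mul_I_re, exp_ofReal_mul_I_im, ofReal_re, ofReal_im]
  nlinarith [Real.sin_sq_add_cos_sq (t - arg a)]

theorem poisson_arc_integral_le_general (θ r : ℝ) (hθ0 : 0 < θ) (hθπ : θ < Real.pi)
    (hr1 : r < 1) (a : ℂ) (ha : ‖a‖ ≤ r) (α : ℝ) :
    (∫ t in α..(α + 2 * θ),
        (1 - ‖a‖ ^ 2) / ‖Complex.exp (t * Complex.I) - a‖ ^ 2)
      ≤ 4 * Real.arctan ((1 + r) / (1 - r) * Real.tan (θ / 2)) := by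
  have hρ1 : ‖a‖ < 1 := ha.trans_lt hr1
  set β := α - arg a + θ
  calc (∫ t in α..(α + 2 * θ), (1 - ‖a‖ ^ 2) / ‖Complex.exp (t * I) - a‖ ^ 2)
      = ∫ t in α..(α + 2 * θ), polarPoissonKernel ‖a‖ (t - arg a) := by
        simp only [norm_exp_ofReal_mul_I_sub_sq, polarPoissonKernel]
    _ = ∫ u in (β - θ)..(β + θ), polarPoissonKernel ‖a‖ u := by
        rw [integral_comp_sub_right]
        congr 1 <;> ring
    _ ≤ ∫ u in -θ..θ, polarPoissonKernel ‖a‖ u :=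
        integral_polarPoissonKernel_arc_le (norm_nonneg a) hρ1 ⟨hθ0.le, hθπ.le⟩ β
    _ = 4 * Real.arctan ((1 + ‖a‖) / (1 - ‖a‖) * Real.tan (θ / 2)) :=
        integral_polarPoissonKernel_neg_self (by rwa [abs_norm]) hθ0.le hθπ
    _ ≤ 4 * Real.arctan ((1 + r) / (1 - r) * Real.tan (θ / 2)) := by
        have htan : 0 ≤ Real.tan (θ / 2) :=
          Real.tan_nonneg_of_nonneg_of_le_pi_div_two (by linarith) (by linarith)
        gcongr
        linarith [norm_nonneg a]

/-- Sharp upper bound for the Poisson kernel integral over an arc: for `0 < θ < π`,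
`0 ≤ r < 1` and any `a` with `|a| ≤ r`, and any arc of angular length `2θ`,
`∫_{α}^{α+2θ} (1 - |a|²)/|e^{it} - a|² dt ≤ 4 arctan(((1+r)/(1-r)) tan(θ/2))`. -/
theorem poisson_arc_integral_le (θ r : ℝ) (hθ0 : 0 < θ) (hθπ : θ < Real.pi)
    (hr0 : 0 ≤ r) (hr1 : r < 1) (a : ℂ) (ha : ‖a‖ ≤ r) (α : ℝ) :
    (∫ t in α..(α + 2 * θ),
        (1 - ‖a‖ ^ 2) / ‖Complex.exp (t * Complex.I) - a‖ ^ 2)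
      ≤ 4 * Real.arctan ((1 + r) / (1 - r) * Real.tan (θ / 2)) :=
  poisson_arc_integral_le_general θ r hθ0 hθπ hr1 a ha α
end

section
/- Fix 0 < θ < π and 0 ≤ r < 1. For every a with |a| ≤ r and every arc of angular length 2θ, ∫ over the arc of (1 - |a|²)/|e^{it} - a|² dt ≥ 4·arctan(((1 - r)/(1 + r))·tan(θ/2)). -/
/-!
For `|a| = s`, the substitution `u = t - arg a` turns the integrand into the angular Poisson
kernel `P s u = (1 - s²) / (1 + s² - 2 s cos u)`, which has the global primitive
`F s u = u + 2 arctan (s sin u / (1 - s cos u))`. The mass `F s (c + θ) - F s (c - θ)` of the arc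
centred at `c` is even and `2π`-periodic in `c`, and antitone on `[0, π]` because `P s` grows with
`cos u`; so it is smallest for the arc centred at `π`, where it equals
`2θ - 4 arctan (s sin θ / (1 + s cos θ)) = 4 arctan ((1 - s)/(1 + s) tan (θ/2))`. This is antitone
in `s`, which handles `|a| ≤ r`.
-/

namespace PoissonArc

open Real

noncomputable def kernel (s u : ℝ) : ℝ := (1 - s ^ 2) / (1 + s ^ 2 - 2 * s * cos u)

/-- Unlike the textbook `2 arctan ((1 + s)/(1 - s) tan (u/2))`, this primitive has no jumps, so
it integrates the kernel over every interval. -/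
noncomputable def primitive (s u : ℝ) : ℝ := u + 2 * arctan (s * sin u / (1 - s * cos u))

noncomputable def arcMass (s θ c : ℝ) : ℝ := primitive s (c + θ) - primitive s (c - θ)

variable {s : ℝ}

lemma one_sub_mul_cos_pos (hs : |s| < 1) (u : ℝ) : 0 < 1 - s * cos u := by
  have : |s * cos u| ≤ |s| := by
    rw [abs_mul]; exact mul_le_of_le_one_right (abs_nonneg s) (abs_cos_le_one u)
  linarith [le_abs_self (s * cos u)]

lemma one_add_sq_sub_mul_cos_pos (hs : |s| < 1) (u : ℝ) : 0 < 1 + s ^ 2 - 2 * s * cos u := by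
  have hsc : 1 + s ^ 2 - 2 * s * cos u = (1 - s * cos u) ^ 2 + (s * sin u) ^ 2 := by
    linear_combination (-s ^ 2) * sin_sq_add_cos_sq u
  rw [hsc]
  have := one_sub_mul_cos_pos hs u
  positivity

lemma continuous_kernel (hs : |s| < 1) : Continuous (kernel s) :=
  continuous_const.div (by fun_prop) fun u => (one_add_sq_sub_mul_cos_pos hs u).ne'

lemma hasDerivAt_primitive (hs : |s| < 1) (u : ℝ) : HasDerivAt (primitive s) (kernel s u) u := by
  have h₁ := one_sub_mul_cos_pos hs u
  have h₂ := one_add_sq_sub_mul_cos_pos hs u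
  have hquot : HasDerivAt (fun u => s * sin u / (1 - s * cos u))
      ((s * cos u * (1 - s * cos u) - s * sin u * (s * sin u)) / (1 - s * cos u) ^ 2) u := by
    refine ((hasDerivAt_sin u).const_mul s).div ?_ h₁.ne'
    simpa using ((hasDerivAt_cos u).const_mul s).const_sub 1
  refine ((hasDerivAt_id' u).add (hquot.arctan.const_mul 2)).congr_deriv ?_
  unfold kernel
  field_simp
  linear_combination (-2 * s ^ 2 * (1 - s * cos u)) * sin_sq_add_cos_sq u

lemma integral_kernel (hs : |s| < 1) (x y : ℝ) :
    ∫ u in x..y, kernel s u = primitive s y - primitive s x :=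
  intervalIntegral.integral_eq_sub_of_hasDerivAt (fun u _ => hasDerivAt_primitive hs u)
    ((continuous_kernel hs).intervalIntegrable x y)

lemma primitive_add_two_pi (s u : ℝ) : primitive s (u + 2 * π) = primitive s u + 2 * π := by
  simp only [primitive, sin_add_two_pi, cos_add_two_pi]
  ring

lemma primitive_neg (s u : ℝ) : primitive s (-u) = -primitive s u := by
  simp only [primitive, sin_neg, cos_neg, mul_neg, neg_div, arctan_neg]
  ring

lemma arcMass_periodic (s θ : ℝ) : Function.Periodic (arcMass s θ) (2 * π) := by
  intro c
  simp only [arcMass, add_right_comm c (2 * π), sub_eq_add_neg, primitive_add_two_pi]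
  ring

lemma arcMass_neg (s θ c : ℝ) : arcMass s θ (-c) = arcMass s θ c := by
  rw [arcMass, arcMass, show -c + θ = -(c - θ) by ring, show -c - θ = -(c + θ) by ring,
    primitive_neg, primitive_neg]
  ring

lemma kernel_le_kernel_of_cos_le (hs₀ : 0 ≤ s) (hs₁ : s < 1) {u v : ℝ} (h : cos u ≤ cos v) :
    kernel s u ≤ kernel s v := by
  have hs : |s| < 1 := abs_lt.mpr ⟨by linarith, hs₁⟩
  have := one_add_sq_sub_mul_cos_pos hs v
  unfold kernel
  gcongr
  nlinarith

lemma hasDerivAt_arcMass (hs : |s| < 1) (θ c : ℝ) :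
    HasDerivAt (arcMass s θ) (kernel s (c + θ) - kernel s (c - θ)) c :=
  ((hasDerivAt_primitive hs (c + θ)).comp_add_const c θ).sub
    ((hasDerivAt_primitive hs (c - θ)).comp_sub_const c θ)

lemma antitoneOn_arcMass (hs₀ : 0 ≤ s) (hs₁ : s < 1) {θ : ℝ} (hθ₀ : 0 ≤ θ) (hθπ : θ ≤ π) :
    AntitoneOn (arcMass s θ) (Set.Icc 0 π) := by
  have hs : |s| < 1 := abs_lt.mpr ⟨by linarith, hs₁⟩
  refine antitoneOn_of_hasDerivWithinAt_nonpos (convex_Icc 0 π)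
    (fun c _ => (hasDerivAt_arcMass hs θ c).continuousAt.continuousWithinAt)
    (fun c _ => (hasDerivAt_arcMass hs θ c).hasDerivWithinAt) fun c hc => ?_
  rw [interior_Icc] at hc
  have hcos : cos (c - θ) - cos (c + θ) = 2 * sin c * sin θ := by
    rw [cos_sub, cos_add]; ring
  have := mul_nonneg (sin_nonneg_of_nonneg_of_le_pi hc.1.le hc.2.le)
    (sin_nonneg_of_nonneg_of_le_pi hθ₀ hθπ)
  exact sub_nonpos.mpr (kernel_le_kernel_of_cos_le hs₀ hs₁ (by linarith))

lemma arcMass_pi_le (hs₀ : 0 ≤ s) (hs₁ : s < 1) {θ : ℝ} (hθ₀ : 0 ≤ θ) (hθπ : θ ≤ π) (c : ℝ) :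
    arcMass s θ π ≤ arcMass s θ c := by
  obtain ⟨d, hd, hcd⟩ := (arcMass_periodic s θ).exists_mem_Ico two_pi_pos c (-π)
  have habs : |d| ≤ π := abs_le.mpr ⟨hd.1, by linarith [hd.2]⟩
  have heven : arcMass s θ |d| = arcMass s θ d := by
    rcases abs_choice d with h | h <;> rw [h]
    exact arcMass_neg s θ d
  rw [hcd, ← heven]
  exact antitoneOn_arcMass hs₀ hs₁ hθ₀ hθπ ⟨abs_nonneg d, habs⟩ ⟨pi_pos.le, le_rfl⟩ habs

lemma arcMass_pi (s θ : ℝ) :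
    arcMass s θ π = 2 * θ - 4 * arctan (s * sin θ / (1 + s * cos θ)) := by
  rw [arcMass, primitive, primitive, add_comm π θ]
  simp only [sin_add_pi, cos_add_pi, sin_pi_sub, cos_pi_sub, mul_neg, neg_div, arctan_neg,
    sub_neg_eq_add]
  ring

lemma two_mul_sub_four_arctan_eq (hs : |s| < 1) {θ : ℝ} (hθ₀ : 0 < θ) (hθπ : θ < π) :
    2 * θ - 4 * arctan (s * sin θ / (1 + s * cos θ))
      = 4 * arctan ((1 - s) / (1 + s) * tan (θ / 2)) := by
  -- In half-angle coordinates, `1 + s cos θ = D` and the arctangent subtraction formula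
  -- collapses to `(1 - s)/(1 + s) tan (θ/2)`.
  obtain ⟨hs₁, hs₂⟩ := abs_lt.mp hs
  have hps : 0 < 1 + s := by linarith
  have hms : 0 < 1 - s := by linarith
  have hc : 0 < cos (θ / 2) := cos_pos_of_mem_Ioo ⟨by linarith, by linarith⟩
  have hpyth := sin_sq_add_cos_sq (θ / 2)
  set D := (1 + s) * cos (θ / 2) ^ 2 + (1 - s) * sin (θ / 2) ^ 2 with hD_def
  have hD : 0 < D := by positivity
  clear_value D
  have hB : s * sin θ / (1 + s * cos θ) = 2 * s * sin (θ / 2) * cos (θ / 2) / D := by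
    have hsin := sin_two_mul (θ / 2)
    have hcos := cos_two_mul (θ / 2)
    rw [mul_div_cancel₀ θ two_ne_zero] at hsin hcos
    rw [hsin, show 1 + s * cos θ = D by linear_combination s * hcos + s * hpyth - hpyth - hD_def]
    ring
  set B := 2 * s * sin (θ / 2) * cos (θ / 2) / D with hB_def
  have hBD : B * D = 2 * s * sin (θ / 2) * cos (θ / 2) := by
    rw [hB_def]; field_simp
  clear_value B
  have hprod : 1 - tan (θ / 2) * -B = (1 + s) / D := by
    rw [tan_eq_sin_div_cos]
    field_simp
    linear_combination sin (θ / 2) * hBD + cos (θ / 2) * hD_def + cos (θ / 2) * (1 + s) * hpyth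
  have hsum : (tan (θ / 2) + -B) / (1 - tan (θ / 2) * -B) = (1 - s) / (1 + s) * tan (θ / 2) := by
    rw [hprod, tan_eq_sin_div_cos]
    field_simp
    linear_combination -cos (θ / 2) * hBD + sin (θ / 2) * hD_def + sin (θ / 2) * (1 - s) * hpyth
  have hadd := arctan_add (show tan (θ / 2) * -B < 1 by
    linarith [show 0 < 1 - tan (θ / 2) * -B from hprod ▸ div_pos hps hD])
  rw [hsum, arctan_neg, arctan_tan (by linarith) (by linarith)] at hadd
  rw [hB]
  linarith

lemma four_arctan_le_integral_kernel (hs₀ : 0 ≤ s) (hs₁ : s < 1) {θ : ℝ} (hθ₀ : 0 < θ)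
    (hθπ : θ < π) (β : ℝ) :
    4 * arctan ((1 - s) / (1 + s) * tan (θ / 2)) ≤ ∫ u in β..β + 2 * θ, kernel s u := by
  have hs : |s| < 1 := abs_lt.mpr ⟨by linarith, hs₁⟩
  have hmin := arcMass_pi_le hs₀ hs₁ hθ₀.le hθπ.le (β + θ)
  rw [arcMass_pi, two_mul_sub_four_arctan_eq hs hθ₀ hθπ, arcMass, add_sub_cancel_right,
    add_assoc, ← two_mul] at hmin
  rwa [integral_kernel hs]

lemma one_sub_div_one_add_le_of_le {r : ℝ} (hs : -1 < s) (hsr : s ≤ r) :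
    (1 - r) / (1 + r) ≤ (1 - s) / (1 + s) := by
  rw [div_le_div_iff₀ (by linarith) (by linarith)]
  nlinarith

end PoissonArc

namespace Complex

lemma sq_norm_exp_ofReal_mul_I_sub (t : ℝ) (a : ℂ) :
    ‖exp (t * I) - a‖ ^ 2 = 1 + ‖a‖ ^ 2 - 2 * ‖a‖ * Real.cos (t - a.arg) := by
  have hre : (exp (t * I) * (starRingEnd ℂ) a).re = ‖a‖ * Real.cos (t - a.arg) := by
    rw [mul_re, conj_re, conj_im, exp_ofReal_mul_I_re, exp_ofReal_mul_I_im,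
      ← norm_mul_cos_arg, ← norm_mul_sin_arg, Real.cos_sub]
    ring
  rw [Complex.sq_norm, normSq_sub, ← Complex.sq_norm, ← Complex.sq_norm, norm_exp_ofReal_mul_I,
    hre]
  ring

end Complex

open PoissonArc in
theorem poisson_arc_integral_ge_general (θ r : ℝ) (hθ0 : 0 < θ) (hθπ : θ < Real.pi)
    (hr1 : r < 1) (a : ℂ) (ha : ‖a‖ ≤ r) (α : ℝ) :
    (∫ t in α..(α + 2 * θ),
        (1 - ‖a‖ ^ 2) / ‖Complex.exp (t * Complex.I) - a‖ ^ 2)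
      ≥ 4 * Real.arctan ((1 - r) / (1 + r) * Real.tan (θ / 2)) := by
  have hkernel : ∀ t : ℝ, (1 - ‖a‖ ^ 2) / ‖Complex.exp (t * Complex.I) - a‖ ^ 2
      = kernel ‖a‖ (t - a.arg) := fun t => by
    rw [Complex.sq_norm_exp_ofReal_mul_I_sub, kernel]
  have htan : 0 ≤ Real.tan (θ / 2) :=
    Real.tan_nonneg_of_nonneg_of_le_pi_div_two (by linarith) (by linarith)
  simp only [hkernel]
  rw [intervalIntegral.integral_comp_sub_right (kernel ‖a‖), add_sub_right_comm]
  calc 4 * Real.arctan ((1 - r) / (1 + r) * Real.tan (θ / 2))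
      ≤ 4 * Real.arctan ((1 - ‖a‖) / (1 + ‖a‖) * Real.tan (θ / 2)) := by
        gcongr 4 * Real.arctan (?_ * _)
        exact one_sub_div_one_add_le_of_le (by linarith [norm_nonneg a]) ha
    _ ≤ _ := four_arctan_le_integral_kernel (norm_nonneg a) (ha.trans_lt hr1) hθ0 hθπ _

/-- Sharp lower bound for the Poisson kernel integral over an arc: for `0 < θ < π`,
`0 ≤ r < 1` and any `a` with `|a| ≤ r`, and any arc of angular length `2θ`,
`∫_{α}^{α+2θ} (1 - |a|²)/|e^{it} - a|² dt ≥ 4 arctan(((1-r)/(1+r)) tan(θ/2))`. -/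
theorem poisson_arc_integral_ge (θ r : ℝ) (hθ0 : 0 < θ) (hθπ : θ < Real.pi)
    (hr0 : 0 ≤ r) (hr1 : r < 1) (a : ℂ) (ha : ‖a‖ ≤ r) (α : ℝ) :
    (∫ t in α..(α + 2 * θ),
        (1 - ‖a‖ ^ 2) / ‖Complex.exp (t * Complex.I) - a‖ ^ 2)
      ≥ 4 * Real.arctan ((1 - r) / (1 + r) * Real.tan (θ / 2)) :=
  poisson_arc_integral_ge_general θ r hθ0 hθπ hr1 a ha α
end

section
/- Let B be a Blaschke product of degree n with all zeros satisfying |a_k| ≤ r < 1. If e^{iα} and e^{iβ} are consecutive solutions of zB(z) = 1 with 0 < β - α = 2ψ* ≤ 2π, then ψ* ≤ ψ, where ψ ∈ (0, π) is the unique root of π = ψ + 2n·arctan(((1-r)/(1+r))·tan(ψ/2)). -/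
/-!
On the unit circle a Blaschke factor `(z - a) / (1 - conj a * z)` is `exp (i A_a(t))` for a
continuous lift `A_a` whose derivative is the Poisson kernel, so `z B(z) = exp (i θ(t))` with
`θ(t) = t + ∑ₖ A_{aₖ}(t)`. Among all arcs of length `2ψ`, the increment of `A_a` is critical only on
the arcs centred at `arg a` and at `arg a + π`; it is smallest on the latter, where it equals
`4 arctan ((1 - |a|) / (1 + |a|) * tan (ψ / 2))`. Hence `θ` gains at least
`2ψ + 4n arctan ((1 - r) / (1 + r) * tan (ψ / 2)) = 2π` on `[α, α + 2ψ]`, and by the intermediate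
value theorem `z B(z) = 1` has a root `e^{it}` with `t ∈ (α, α + 2ψ]`.
-/

section
open Real

variable {ρ ψ : ℝ}

lemma Function.Periodic.eq_of_cos_sub_eq_one {α : Type*} {f : ℝ → α}
    (hf : Function.Periodic f (2 * π)) {x y : ℝ} (h : cos (x - y) = 1) : f x = f y := by
  obtain ⟨n, hn⟩ := (cos_eq_one_iff _).1 h
  rw [show x = y + n * (2 * π) by linarith]
  exact hf.int_mul n y

lemma Function.Periodic.exists_forall_le_of_continuous {α : Type*} [LinearOrder α]
    [TopologicalSpace α] [ClosedIicTopology α] {f : ℝ → α} {c : ℝ}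
    (hf : Function.Periodic f c) (hc : c ≠ 0) (hcont : Continuous f) : ∃ x, ∀ y, f x ≤ f y := by
  obtain ⟨_, ⟨x, rfl⟩, hx⟩ :=
    (hf.compact_of_continuous hc hcont).exists_isLeast (Set.range_nonempty f)
  exact ⟨x, fun y => hx ⟨y, rfl⟩⟩

lemma one_sub_mul_cos_pos (hρ : |ρ| < 1) (t : ℝ) : 0 < 1 - ρ * cos t := by
  have : |ρ * cos t| ≤ |ρ| := by
    rw [abs_mul]; exact mul_le_of_le_one_right (abs_nonneg ρ) (abs_cos_le_one t)
  linarith [le_abs_self (ρ * cos t)]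

lemma norm_exp_mul_I_sub_ofReal_sq (ρ t : ℝ) :
    ‖Complex.exp (t * Complex.I) - ρ‖ ^ 2 = 1 - 2 * ρ * cos t + ρ ^ 2 := by
  rw [← Complex.normSq_eq_norm_sq, Complex.normSq_apply]
  simp only [Complex.sub_re, Complex.sub_im, Complex.exp_ofReal_mul_I_re,
    Complex.exp_ofReal_mul_I_im, Complex.ofReal_re, Complex.ofReal_im]
  linear_combination sin_sq_add_cos_sq t

lemma poissonKernel_zero_ofReal_exp_mul_I (ρ t : ℝ) :
    poissonKernel 0 ρ (Complex.exp (t * Complex.I)) =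
      (1 - ρ ^ 2) / (1 - 2 * ρ * cos t + ρ ^ 2) := by
  rw [poissonKernel, sub_zero, sub_zero, Complex.norm_exp_ofReal_mul_I, Complex.norm_real,
    Real.norm_eq_abs, sq_abs, one_pow, norm_exp_mul_I_sub_ofReal_sq]

noncomputable def blaschkeArgReal (ρ t : ℝ) : ℝ := t + 2 * arctan (ρ * sin t / (1 - ρ * cos t))

lemma hasDerivAt_blaschkeArgReal (hρ : |ρ| < 1) (t : ℝ) :
    HasDerivAt (blaschkeArgReal ρ) (poissonKernel 0 ρ (Complex.exp (t * Complex.I))) t := by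
  have hc := one_sub_mul_cos_pos hρ t
  have hq := ((hasDerivAt_sin t).const_mul ρ).div
    (((hasDerivAt_cos t).const_mul ρ).const_sub 1) hc.ne'
  refine ((hasDerivAt_id t).add (hq.arctan.const_mul 2)).congr_deriv ?_
  have hD : 1 - 2 * ρ * cos t + ρ ^ 2 = (1 - ρ * cos t) ^ 2 + (ρ * sin t) ^ 2 := by
    linear_combination (-ρ ^ 2) * sin_sq_add_cos_sq t
  rw [poissonKernel_zero_ofReal_exp_mul_I, Pi.div_apply, hD]
  field_simp
  linear_combination (-ρ ^ 2) * sin_sq_add_cos_sq t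

lemma continuous_blaschkeArgReal (hρ : |ρ| < 1) : Continuous (blaschkeArgReal ρ) :=
  continuous_iff_continuousAt.2 fun t => (hasDerivAt_blaschkeArgReal hρ t).continuousAt

lemma blaschkeArgReal_add_two_pi (ρ t : ℝ) :
    blaschkeArgReal ρ (t + 2 * π) = blaschkeArgReal ρ t + 2 * π := by
  simp only [blaschkeArgReal, sin_add_two_pi, cos_add_two_pi]
  ring

lemma blaschkeArgReal_neg (ρ t : ℝ) : blaschkeArgReal ρ (-t) = -blaschkeArgReal ρ t := by
  simp only [blaschkeArgReal, sin_neg, cos_neg, mul_neg, neg_div, arctan_neg]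
  ring

lemma blaschkeArgReal_pi_add_sub_pi_sub (ρ ψ : ℝ) :
    blaschkeArgReal ρ (π + ψ) - blaschkeArgReal ρ (π - ψ) =
      2 * ψ - 4 * arctan (ρ * sin ψ / (1 + ρ * cos ψ)) := by
  rw [show π + ψ = -(π - ψ) + 2 * π by ring, blaschkeArgReal_add_two_pi, blaschkeArgReal_neg]
  simp only [blaschkeArgReal, sin_pi_sub, cos_pi_sub, mul_neg, sub_neg_eq_add]
  ring

lemma arctan_mul_tan_half (hρ : |ρ| < 1) (hψ0 : -π < ψ) (hψπ : ψ < π) :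
    arctan ((1 - ρ) / (1 + ρ) * tan (ψ / 2)) = ψ / 2 - arctan (ρ * sin ψ / (1 + ρ * cos ψ)) := by
  obtain ⟨hρl, hρr⟩ := abs_lt.1 hρ
  have hcos : cos ψ ≠ -1 := by
    have := cos_pos_of_mem_Ioo (x := ψ / 2) ⟨by linarith, by linarith⟩
    rw [show ψ = 2 * (ψ / 2) by ring, cos_two_mul]
    nlinarith
  have harctan : arctan (tan (ψ / 2)) = ψ / 2 := arctan_tan (by linarith) (by linarith)
  rw [sin_eq_two_mul_tan_half_div_one_add_tan_half_sq,
    cos_eq_two_mul_tan_half_div_one_sub_tan_half_sq ψ hcos]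
  generalize tan (ψ / 2) = t at harctan ⊢
  have hc : 0 < (1 - ρ) / (1 + ρ) := div_pos (by linarith) (by linarith)
  have hsum := arctan_add (x := t) (y := -((1 - ρ) / (1 + ρ) * t)) (by nlinarith [sq_nonneg t])
  have hx : (t + -((1 - ρ) / (1 + ρ) * t)) / (1 - t * -((1 - ρ) / (1 + ρ) * t)) =
      ρ * (2 * t / (1 + t ^ 2)) / (1 + ρ * ((1 - t ^ 2) / (1 + t ^ 2))) := by
    have hρ1 : 1 + ρ ≠ 0 := by linarith
    field_simp
    ring
  rw [arctan_neg, harctan, hx] at hsum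
  linarith

lemma sin_add_eq_zero_of_poissonKernel_eq (hρ0 : ρ ≠ 0) (hρ : |ρ| < 1) (hψ : sin ψ ≠ 0) {s : ℝ}
    (h : poissonKernel 0 ρ (Complex.exp (↑(s + 2 * ψ) * Complex.I)) =
      poissonKernel 0 ρ (Complex.exp (s * Complex.I))) : sin (s + ψ) = 0 := by
  have hD : ∀ t, 0 < 1 - 2 * ρ * cos t + ρ ^ 2 := fun t => by
    nlinarith [one_sub_mul_cos_pos hρ t, sin_sq_add_cos_sq t, sq_nonneg (ρ * sin t)]
  have hnum : 1 - ρ ^ 2 ≠ 0 := by nlinarith [abs_lt.1 hρ]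
  rw [poissonKernel_zero_ofReal_exp_mul_I, poissonKernel_zero_ofReal_exp_mul_I,
    div_eq_div_iff (hD _).ne' (hD _).ne'] at h
  have hcos : cos (s + 2 * ψ) = cos s := by
    have := mul_left_cancel₀ hnum h
    exact mul_left_cancel₀ (by positivity : -2 * ρ ≠ 0) (by linarith)
  have := cos_sub_cos (s + 2 * ψ) s
  rw [hcos, sub_self, show (s + 2 * ψ + s) / 2 = s + ψ by ring,
    show (s + 2 * ψ - s) / 2 = ψ by ring] at this
  simpa [hψ] using this.symm

lemma blaschkeArgReal_pi_add_sub_pi_sub_le_sub_neg (hρ0 : 0 ≤ ρ) (hρ1 : ρ < 1) (hψ0 : 0 ≤ ψ)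
    (hψπ : ψ ≤ π) :
    blaschkeArgReal ρ (π + ψ) - blaschkeArgReal ρ (π - ψ) ≤
      blaschkeArgReal ρ ψ - blaschkeArgReal ρ (-ψ) := by
  have hρ : |ρ| < 1 := by rwa [abs_of_nonneg hρ0]
  have hsin := sin_nonneg_of_nonneg_of_le_pi hψ0 hψπ
  have h₁ : 0 ≤ arctan (ρ * sin ψ / (1 - ρ * cos ψ)) :=
    arctan_nonneg.2 (div_nonneg (by positivity) (one_sub_mul_cos_pos hρ ψ).le)
  have h₂ : 0 ≤ arctan (ρ * sin ψ / (1 + ρ * cos ψ)) := by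
    have := one_sub_mul_cos_pos (ρ := -ρ) (by rwa [abs_neg]) ψ
    rw [neg_mul, sub_neg_eq_add] at this
    exact arctan_nonneg.2 (div_nonneg (by positivity) this.le)
  rw [blaschkeArgReal_pi_add_sub_pi_sub, blaschkeArgReal_neg, blaschkeArgReal]
  linarith

lemma blaschkeArgReal_pi_add_sub_pi_sub_le (hρ0 : 0 ≤ ρ) (hρ1 : ρ < 1) (hψ0 : 0 < ψ) (hψπ : ψ < π)
    (s : ℝ) :
    blaschkeArgReal ρ (π + ψ) - blaschkeArgReal ρ (π - ψ) ≤
      blaschkeArgReal ρ (s + 2 * ψ) - blaschkeArgReal ρ s := by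
  have hρ : |ρ| < 1 := by rwa [abs_of_nonneg hρ0]
  set F : ℝ → ℝ := fun s => blaschkeArgReal ρ (s + 2 * ψ) - blaschkeArgReal ρ s
  have hper : Function.Periodic F (2 * π) := fun s => by
    simp only [F, add_right_comm s, blaschkeArgReal_add_two_pi]
    ring
  have hcont : Continuous F := by
    have := continuous_blaschkeArgReal hρ
    fun_prop
  have hanti : F (π - ψ) = blaschkeArgReal ρ (π + ψ) - blaschkeArgReal ρ (π - ψ) := by
    simp only [F, show π - ψ + 2 * ψ = π + ψ by ring]
  rw [← hanti]
  obtain ⟨s₀, hmin⟩ := hper.exists_forall_le_of_continuous two_pi_pos.ne' hcont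
  refine le_trans ?_ (hmin s)
  rcases hρ0.eq_or_lt with rfl | hρpos
  · simp [F, blaschkeArgReal]
  -- At a minimiser the Poisson kernel agrees at both endpoints, so the arc is centred at 0 or π.
  have hderiv : HasDerivAt F (poissonKernel 0 ρ (Complex.exp (↑(s₀ + 2 * ψ) * Complex.I)) -
      poissonKernel 0 ρ (Complex.exp (s₀ * Complex.I))) s₀ :=
    ((hasDerivAt_blaschkeArgReal hρ _).comp_add_const s₀ (2 * ψ)).sub
      (hasDerivAt_blaschkeArgReal hρ s₀)
  have hcrit := IsLocalMin.hasDerivAt_eq_zero (Filter.Eventually.of_forall hmin) hderiv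
  have hsin := sin_add_eq_zero_of_poissonKernel_eq hρpos.ne' hρ
    (sin_pos_of_pos_of_lt_pi hψ0 hψπ).ne' (sub_eq_zero.1 hcrit)
  rcases sin_eq_zero_iff_cos_eq.1 hsin with hcos | hcos
  · rw [hanti, hper.eq_of_cos_sub_eq_one (x := s₀) (y := -ψ) (by rwa [sub_neg_eq_add])]
    simp only [F, show -ψ + 2 * ψ = ψ by ring]
    exact blaschkeArgReal_pi_add_sub_pi_sub_le_sub_neg hρ0 hρ1 hψ0.le hψπ.le
  · refine (hper.eq_of_cos_sub_eq_one (x := s₀) (y := π - ψ) ?_).ge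
    rw [show s₀ - (π - ψ) = s₀ + ψ - π by ring, cos_sub_pi, hcos, neg_neg]

end

open Complex

lemma Complex.exp_two_mul_arctan_mul_I (x : ℝ) :
    exp (2 * Real.arctan x * I) = (1 + x * I) / (1 - x * I) := by
  have hne : (1 + x * I) / (1 - x * I) ≠ 0 := by
    refine div_ne_zero ?_ ?_ <;> intro h <;> simpa using congrArg re h
  rw [ofReal_arctan, arctan, show 2 * (-I / 2 * log ((1 + x * I) / (1 - x * I))) * I =
    -(I * I) * log ((1 + x * I) / (1 - x * I)) by ring, I_mul_I, neg_neg, one_mul, exp_log hne]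

lemma exp_blaschkeArgReal_mul_I {ρ : ℝ} (hρ : |ρ| < 1) (t : ℝ) :
    exp (blaschkeArgReal ρ t * I) = (exp (t * I) - ρ) / (1 - ρ * exp (t * I)) := by
  have hc := one_sub_mul_cos_pos hρ t
  have hpyth : (Real.sin t : ℂ) ^ 2 + (Real.cos t : ℂ) ^ 2 = 1 := by
    exact_mod_cast Real.sin_sq_add_cos_sq t
  rw [blaschkeArgReal, ofReal_add, add_mul, Complex.exp_add, ofReal_mul, ofReal_ofNat,
    exp_two_mul_arctan_mul_I, exp_mul_I, ← ofReal_cos, ← ofReal_sin]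
  set c := Real.cos t
  set s := Real.sin t
  have hc' : (1 - ρ * c : ℂ) ≠ 0 := by exact_mod_cast hc.ne'
  have hden : 1 - ρ * (c + s * I) ≠ 0 := by
    intro h; simpa [hc.ne'] using congrArg re h
  have hden' : 1 - (ρ * s / (1 - ρ * c) : ℝ) * I ≠ 0 := by
    intro h; simpa [← ofReal_div] using congrArg re h
  have hx : (1 + (ρ * s / (1 - ρ * c) : ℝ) * I) / (1 - (ρ * s / (1 - ρ * c) : ℝ) * I) =
      (1 - ρ * (c - s * I)) / (1 - ρ * (c + s * I)) := by
    rw [div_eq_div_iff hden' hden]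
    push_cast
    field_simp
    ring
  rw [hx, mul_div_assoc']
  congr 1
  linear_combination (-ρ : ℂ) * hpyth + ρ * s ^ 2 * I_sq

noncomputable def blaschkeArg (a : ℂ) (t : ℝ) : ℝ := arg a + blaschkeArgReal ‖a‖ (t - arg a)

lemma exp_blaschkeArg_mul_I {a : ℂ} (ha : ‖a‖ < 1) (t : ℝ) :
    exp (blaschkeArg a t * I) = (exp (t * I) - a) / (1 - starRingEnd ℂ a * exp (t * I)) := by
  have hu : exp (arg a * I) * exp (-(arg a * I)) = 1 := by rw [← Complex.exp_add]; simp
  have ha' : a = ‖a‖ * exp (arg a * I) := (norm_mul_exp_arg_mul_I a).symm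
  have hconj : starRingEnd ℂ a = ‖a‖ * exp (-(arg a * I)) := by
    conv_lhs => rw [ha']
    rw [map_mul, conj_ofReal, ← exp_conj, map_mul, conj_ofReal, conj_I, mul_neg]
  rw [blaschkeArg, ofReal_add, add_mul, Complex.exp_add,
    exp_blaschkeArgReal_mul_I (by rwa [abs_norm]), ofReal_sub, sub_mul, sub_eq_add_neg _ (_ * I),
    Complex.exp_add, mul_div_assoc', hconj]
  conv_rhs => enter [1]; rw [ha']
  congr 1
  · linear_combination exp (t * I) * hu
  · ring

lemma continuous_blaschkeArg {a : ℂ} (ha : ‖a‖ < 1) : Continuous (blaschkeArg a) :=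
  continuous_const.add
    ((continuous_blaschkeArgReal (by rwa [abs_norm])).comp (continuous_sub_right _))

lemma le_blaschkeArg_add_sub {a : ℂ} {r ψ : ℝ} (ha : ‖a‖ ≤ r) (hr : r < 1) (hψ0 : 0 < ψ)
    (hψπ : ψ < Real.pi) (s : ℝ) :
    4 * Real.arctan ((1 - r) / (1 + r) * Real.tan (ψ / 2)) ≤
      blaschkeArg a (s + 2 * ψ) - blaschkeArg a s := by
  have hρ : |‖a‖| < 1 := by rw [abs_norm]; exact ha.trans_lt hr
  have htan : 0 ≤ Real.tan (ψ / 2) :=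
    (Real.tan_pos_of_pos_of_lt_pi_div_two (by linarith) (by linarith)).le
  have hcoef : (1 - r) / (1 + r) ≤ (1 - ‖a‖) / (1 + ‖a‖) := by
    have := norm_nonneg a
    rw [div_le_div_iff₀ (by linarith) (by linarith)]
    nlinarith
  calc 4 * Real.arctan ((1 - r) / (1 + r) * Real.tan (ψ / 2))
      ≤ 4 * Real.arctan ((1 - ‖a‖) / (1 + ‖a‖) * Real.tan (ψ / 2)) := by
        gcongr
    _ = blaschkeArgReal ‖a‖ (Real.pi + ψ) - blaschkeArgReal ‖a‖ (Real.pi - ψ) := by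
        rw [blaschkeArgReal_pi_add_sub_pi_sub, arctan_mul_tan_half hρ (by linarith) hψπ]
        ring
    _ ≤ blaschkeArgReal ‖a‖ (s - arg a + 2 * ψ) - blaschkeArgReal ‖a‖ (s - arg a) :=
        blaschkeArgReal_pi_add_sub_pi_sub_le (norm_nonneg a) (ha.trans_lt hr) hψ0 hψπ _
    _ = blaschkeArg a (s + 2 * ψ) - blaschkeArg a s := by
        simp only [blaschkeArg, add_sub_right_comm s]
        ring

lemma exp_mul_I_add_sum_blaschkeArg {ι : Type*} [Fintype ι] {a : ι → ℂ} (ha : ∀ k, ‖a k‖ < 1)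
    (t : ℝ) :
    exp (↑(t + ∑ k, blaschkeArg (a k) t) * I) =
      exp (t * I) * ∏ k, (exp (t * I) - a k) / (1 - starRingEnd ℂ (a k) * exp (t * I)) := by
  rw [ofReal_add, add_mul, Complex.exp_add, ofReal_sum, Finset.sum_mul, exp_sum]
  exact congrArg _ (Finset.prod_congr rfl fun k _ => exp_blaschkeArg_mul_I (ha k) t)

lemma exists_mem_Ioc_exp_mul_I_eq_one {θ : ℝ → ℝ} {a b : ℝ} (hab : a ≤ b)
    (hθ : ContinuousOn θ (Set.Icc a b)) (ha : exp (θ a * I) = 1)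
    (h : θ a + 2 * Real.pi ≤ θ b) : ∃ t ∈ Set.Ioc a b, exp (θ t * I) = 1 := by
  obtain ⟨t, ht, hθt⟩ := intermediate_value_Ioc hab hθ ⟨by linarith [Real.pi_pos], h⟩
  refine ⟨t, ht, ?_⟩
  rw [hθt, ofReal_add, add_mul, Complex.exp_add, ha, one_mul, ofReal_mul, ofReal_ofNat,
    exp_two_pi_mul_I]

theorem max_separation_prevertices_general (n : ℕ) (r : ℝ) (hr : r < 1)
    (a : Fin n → ℂ) (ha : ∀ k, ‖a k‖ ≤ r) (B : ℂ → ℂ)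
    (hB : ∀ z : ℂ, B z = ∏ k, (z - a k) / (1 - (starRingEnd ℂ) (a k) * z))
    (α β : ℝ)
    (hα1 : Complex.exp (α * Complex.I) * B (Complex.exp (α * Complex.I)) = 1)
    (hcons : ∀ t : ℝ, α < t → t < β →
      Complex.exp (t * Complex.I) * B (Complex.exp (t * Complex.I)) ≠ 1)
    (ψ : ℝ) (hψ : ψ ∈ Set.Ioo 0 Real.pi)
    (hroot : Real.pi = ψ + 2 * n * Real.arctan ((1 - r) / (1 + r) * Real.tan (ψ / 2))) :
    (β - α) / 2 ≤ ψ := by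
  obtain ⟨hψ0, hψπ⟩ := hψ
  by_contra! hlt
  have hak : ∀ k, ‖a k‖ < 1 := fun k => (ha k).trans_lt hr
  set θ : ℝ → ℝ := fun t => t + ∑ k, blaschkeArg (a k) t
  have hθ : ∀ t : ℝ, exp (θ t * I) = exp (t * I) * B (exp (t * I)) := fun t => by
    rw [hB]; exact exp_mul_I_add_sum_blaschkeArg hak t
  have hθcont : Continuous θ :=
    continuous_id.add (continuous_finsetSum _ fun k _ => continuous_blaschkeArg (hak k))
  have hgain : θ α + 2 * Real.pi ≤ θ (α + 2 * ψ) := by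
    have := Finset.sum_le_sum fun k (_ : k ∈ Finset.univ) =>
      le_blaschkeArg_add_sub (ha k) hr hψ0 hψπ α
    simp only [Finset.sum_const, Finset.card_univ, Fintype.card_fin, nsmul_eq_mul,
      Finset.sum_sub_distrib] at this
    simp only [θ]
    linarith
  obtain ⟨t, ⟨hαt, htψ⟩, ht⟩ := exists_mem_Ioc_exp_mul_I_eq_one (by linarith)
    hθcont.continuousOn (by rw [hθ]; exact hα1) hgain
  exact hcons t hαt (by linarith) (by rw [← hθ]; exact ht)

/-- Maximum separation of pre-vertices: if `e^{iα}, e^{iβ}` are consecutive solutions of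
`z B(z) = 1` with `0 < β - α = 2ψ* ≤ 2π`, where `B` is a Blaschke product of degree `n`
with zeros `|aₖ| ≤ r < 1`, then `ψ* ≤ ψ`, the unique root in `(0, π)` of
`π = ψ + 2n arctan(((1-r)/(1+r)) tan(ψ/2))`. -/
theorem max_separation_prevertices (n : ℕ) (r : ℝ) (hr0 : 0 ≤ r) (hr : r < 1)
    (a : Fin n → ℂ) (ha : ∀ k, ‖a k‖ ≤ r) (B : ℂ → ℂ)
    (hB : ∀ z : ℂ, B z = ∏ k, (z - a k) / (1 - (starRingEnd ℂ) (a k) * z))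
    (α β : ℝ) (hαβ : α < β) (hβ : β ≤ α + 2 * Real.pi)
    (hα1 : Complex.exp (α * Complex.I) * B (Complex.exp (α * Complex.I)) = 1)
    (hβ1 : Complex.exp (β * Complex.I) * B (Complex.exp (β * Complex.I)) = 1)
    (hcons : ∀ t : ℝ, α < t → t < β →
      Complex.exp (t * Complex.I) * B (Complex.exp (t * Complex.I)) ≠ 1)
    (ψ : ℝ) (hψ : ψ ∈ Set.Ioo 0 Real.pi)
    (hroot : Real.pi = ψ + 2 * n * Real.arctan ((1 - r) / (1 + r) * Real.tan (ψ / 2))) :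
    (β - α) / 2 ≤ ψ :=
  max_separation_prevertices_general n r hr a ha B hB α β hα1 hcons ψ hψ hroot
end
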